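/- For every univariate polynomial S ∈ ℝ[X], the total degree of the two-variable polynomial Q + S(P) in ℝ[x,y] is at least 25. (Consequently no Pinchuk map, all of which have the form (P, Q + S(P)), has total degree less than 25.) -/

import Mathlib

open MvPolynomial

/-- `t = xy − 1`, with `X 0 = x`, `X 1 = y`. -/
noncomputable def tP : MvPolynomial (Fin 2) ℝ := X 0 * X 1 - 1

/-- `h = t(xt + 1)`. -/
noncomputable def hP : MvPolynomial (Fin 2) ℝ := tP * (X 0 * tP + 1)

/-- `f = (xt + 1)²(t² + y)`. -/
noncomputable def fP : MvPolynomial (Fin 2) ℝ := (X 0 * tP + 1) ^ 2 * (tP ^ 2 + X 1)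

/-- `P = f + h`. -/
noncomputable def PP : MvPolynomial (Fin 2) ℝ := fP + hP

/-- The auxiliary polynomial `u(f,h)`. -/
noncomputable def uP : MvPolynomial (Fin 2) ℝ :=
  170 * fP * hP + 91 * hP ^ 2 + 195 * fP * hP ^ 2 + 69 * hP ^ 3 + 75 * fP * hP ^ 3 +
    C (75 / 4 : ℝ) * hP ^ 4

/-- `Q = −t² − 6th(h + 1) − u(f,h)`. -/
noncomputable def QP : MvPolynomial (Fin 2) ℝ := -tP ^ 2 - 6 * tP * hP * (hP + 1) - uP

/-!
Restrict to the diagonal `y = x`. This does not raise degrees, `P` becomes a polynomial of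
degree 10 and `Q` one of degree 25, so `S(P)` restricts to a polynomial whose degree is a
multiple of 10 and cannot cancel the top-degree term of the restriction of `Q`.
-/

theorem MvPolynomial.natDegree_aeval_le_totalDegree_mul {σ R : Type*} [CommSemiring R]
    {g : σ → Polynomial R} {n : ℕ} (hg : ∀ i, (g i).natDegree ≤ n)
    (p : MvPolynomial σ R) :
    (aeval g p).natDegree ≤ p.totalDegree * n := by
  conv_lhs => rw [p.as_sum]
  rw [map_sum]
  refine Polynomial.natDegree_sum_le_of_forall_le _ _ fun d hd => ?_
  rw [aeval_monomial, ← Polynomial.C_eq_algebraMap]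
  calc _ ≤ (d.prod fun i k => g i ^ k).natDegree := Polynomial.natDegree_C_mul_le _ _
    _ ≤ ∑ i ∈ d.support, d i * n :=
        (Polynomial.natDegree_prod_le _ _).trans <| Finset.sum_le_sum fun i _ =>
          Polynomial.natDegree_pow_le.trans (Nat.mul_le_mul_left _ (hg i))
    _ = d.degree * n := by rw [Finsupp.degree_apply, Finset.sum_mul]
    _ ≤ p.totalDegree * n := Nat.mul_le_mul_right _ (le_totalDegree hd)

theorem Polynomial.natDegree_le_natDegree_add_comp {R : Type*} [Semiring R] [NoZeroDivisors R]
    {p q : Polynomial R} (h : ¬ p.natDegree ∣ q.natDegree) (S : Polynomial R) :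
    q.natDegree ≤ (q + S.comp p).natDegree := by
  have hne : (S.comp p).natDegree ≠ q.natDegree := by
    rw [natDegree_comp]; exact fun e => h ⟨S.natDegree, by rw [← e, mul_comm]⟩
  rcases hne.lt_or_gt with hlt | hlt
  · rw [natDegree_add_eq_left_of_natDegree_lt hlt]
  · rw [natDegree_add_eq_right_of_natDegree_lt hlt]; exact hlt.le

noncomputable abbrev restrictToDiagonal : MvPolynomial (Fin 2) ℝ →ₐ[ℝ] Polynomial ℝ :=
  aeval fun _ => Polynomial.X

lemma natDegree_restrictToDiagonal_PP : (restrictToDiagonal PP).natDegree = 10 := by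
  simp only [PP, fP, hP, tP, map_add, map_sub, map_mul, map_pow, map_one, aeval_X]
  compute_degree!

lemma natDegree_restrictToDiagonal_QP : (restrictToDiagonal QP).natDegree = 25 := by
  simp only [QP, uP, fP, hP, tP, map_add, map_sub, map_mul, map_pow, map_neg, map_one,
    map_ofNat, aeval_X, aeval_C, Polynomial.algebraMap_eq]
  compute_degree!
  rw [Polynomial.coeff_eq_zero_of_natDegree_lt (by compute_degree!)]
  norm_num

/-- No Pinchuk map has total degree less than 25: for every univariate
`S ∈ ℝ[X]`, the total degree of `Q + S(P)` is at least 25. -/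
theorem pinchuk_degree_at_least_25 (S : Polynomial ℝ) :
    25 ≤ (QP + Polynomial.aeval PP S).totalDegree := by
  have hrestrict : restrictToDiagonal (QP + Polynomial.aeval PP S) =
      restrictToDiagonal QP + S.comp (restrictToDiagonal PP) := by
    rw [map_add, ← Polynomial.aeval_algHom_apply, Polynomial.comp_eq_aeval]
  calc 25 = (restrictToDiagonal QP).natDegree := natDegree_restrictToDiagonal_QP.symm
    _ ≤ (restrictToDiagonal QP + S.comp (restrictToDiagonal PP)).natDegree :=
        Polynomial.natDegree_le_natDegree_add_comp
          (by rw [natDegree_restrictToDiagonal_PP, natDegree_restrictToDiagonal_QP]; decide) S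
    _ = (restrictToDiagonal (QP + Polynomial.aeval PP S)).natDegree := by rw [hrestrict]
    _ ≤ (QP + Polynomial.aeval PP S).totalDegree * 1 :=
        natDegree_aeval_le_totalDegree_mul (fun _ => Polynomial.natDegree_X_le) _
    _ = _ := mul_one _
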